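/- Descent step lemma: fix α ≥ 1, an α-congestion-approximator R for (B, C), and a demand b in the column space of B. Define the potential φ(f) = lmax(C⁻¹ f) + lmax(2α·R(b − B f)) and its gradient g(f) = C⁻¹ ∇lmax(C⁻¹ f) − 2α·Bᵀ Rᵀ ∇lmax(2α·R(b − B f)). Let δ = ‖C g(f)‖₁ and define h ∈ ℝ^E by h_e = −(δ/(1 + 4α²))·sgn(g(f)_e)·c_e (with sgn(0) = 0). Then φ(f + h) ≤ φ(f) − δ²/(2 + 8α²). -/

import Mathlib

/-!
`lmax` is `1`-smooth for `‖·‖_∞`: along a line `x + s u` the second derivative of `lmax` is the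
variance of `u` under the Gibbs weights `∝ e^{±xᵢ}`, so
`lmax (x + u) ≤ lmax x + ⟨∇lmax x, u⟩ + ‖u‖_∞² / 2`.

The step `h` changes `C⁻¹ f` by at most `t = δ / (1 + 4α²)` in every coordinate. Since `R` never
overestimates `opt` and `h` itself routes `B h`, also `‖R B h‖_∞ ≤ opt (B h) ≤ t`, so the second
argument `2α R (b - B f)` moves by at most `2α t`. By the chain rule the first-order terms add up to
`⟨g, h⟩ = -t δ`, the quadratic ones to `(1 + 4α²) t² / 2`, and `t` is the minimiser of their sum,
`-δ² / (2 + 8α²)`.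
-/

open Matrix

/-- `linf x` is the maximum absolute entry of the vector `x`, i.e. `‖x‖_∞`. -/
noncomputable def linf {ι : Type*} [Fintype ι] (x : ι → ℝ) : ℝ := ⨆ i, |x i|

/-- `l1 x` is the sum of absolute entries of the vector `x`, i.e. `‖x‖₁`. -/
def l1 {ι : Type*} [Fintype ι] (x : ι → ℝ) : ℝ := ∑ i, |x i|

/-- `opt B c b` is the minimum congestion `‖C⁻¹ f‖_∞` over flows `f` with `B f = b`,
where `C` is the diagonal matrix of capacities `c`. -/
noncomputable def opt {V E : Type*} [Fintype V] [Fintype E]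
    (B : Matrix V E ℝ) (c : E → ℝ) (b : V → ℝ) : ℝ :=
  sInf {t : ℝ | ∃ f : E → ℝ, B.mulVec f = b ∧ t = linf fun e => f e / c e}

/-- `R` is an `α`-congestion-approximator for `(B, C)`:
`‖R b‖_∞ ≤ opt(b) ≤ α · ‖R b‖_∞` for every `b` in the column space of `B`. -/
def IsCongestionApprox {V E W : Type*} [Fintype V] [Fintype E] [Fintype W]
    (B : Matrix V E ℝ) (c : E → ℝ) (α : ℝ) (R : Matrix W V ℝ) : Prop :=
  ∀ b : V → ℝ, (∃ f : E → ℝ, B.mulVec f = b) →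
    linf (R.mulVec b) ≤ opt B c b ∧ opt B c b ≤ α * linf (R.mulVec b)

/-- The symmetric softmax: `lmax(x) = log (Σ_i (e^{x_i} + e^{-x_i}))`. -/
noncomputable def lmax {ι : Type*} [Fintype ι] (x : ι → ℝ) : ℝ :=
  Real.log (∑ i, (Real.exp (x i) + Real.exp (-x i)))

/-- The gradient of the symmetric softmax. -/
noncomputable def lmaxGrad {ι : Type*} [Fintype ι] (x : ι → ℝ) : ι → ℝ :=
  fun i => (Real.exp (x i) - Real.exp (-x i)) / ∑ j, (Real.exp (x j) + Real.exp (-x j))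

namespace Real

lemma abs_sign_le_one (x : ℝ) : |sign x| ≤ 1 := by
  rcases sign_apply_eq x with h | h | h <;> simp [h]

lemma mul_sign_self (x : ℝ) : x * sign x = |x| := by
  rcases lt_trichotomy x 0 with hx | rfl | hx
  · simp [sign_of_neg hx, abs_of_neg hx]
  · simp
  · simp [sign_of_pos hx, abs_of_pos hx]

end Real

section linf

variable {ι : Type*} [Fintype ι]

lemma abs_le_linf (x : ι → ℝ) (i : ι) : |x i| ≤ linf x :=
  le_ciSup (f := fun j => |x j|) (Set.finite_range _).bddAbove i

lemma linf_nonneg (x : ι → ℝ) : 0 ≤ linf x :=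
  Real.iSup_nonneg fun _ => abs_nonneg _

lemma linf_le {x : ι → ℝ} {m : ℝ} (hm : 0 ≤ m) (h : ∀ i, |x i| ≤ m) : linf x ≤ m :=
  Real.iSup_le h hm

end linf

lemma opt_mulVec_le {V E : Type*} [Fintype V] [Fintype E] (B : Matrix V E ℝ) (c : E → ℝ)
    (f : E → ℝ) : opt B c (B *ᵥ f) ≤ linf fun e => f e / c e :=
  csInf_le ⟨0, by rintro _ ⟨_, -, rfl⟩; exact linf_nonneg _⟩ ⟨f, rfl, rfl⟩

lemma IsCongestionApprox.linf_mulVec_mulVec_le {V E W : Type*} [Fintype V] [Fintype E]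
    [Fintype W] {B : Matrix V E ℝ} {c : E → ℝ} {α : ℝ} {R : Matrix W V ℝ}
    (hR : IsCongestionApprox B c α R) (f : E → ℝ) :
    linf (R *ᵥ (B *ᵥ f)) ≤ linf fun e => f e / c e :=
  (hR _ ⟨f, rfl⟩).1.trans (opt_mulVec_le B c f)

lemma le_add_deriv_add_half_of_deriv_le {ψ q q' : ℝ → ℝ} {M : ℝ}
    (hψ : ∀ t, HasDerivAt ψ (q t) t) (hq : ∀ t, HasDerivAt q (q' t) t)
    (hM : ∀ t, q' t ≤ M) : ψ 1 ≤ ψ 0 + q 0 + M / 2 := by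
  have hq_le : ∀ t, 0 ≤ t → q t - q 0 ≤ M * t := fun t ht => by
    simpa using image_sub_le_mul_sub_of_deriv_le (fun s => (hq s).differentiableAt)
      (fun s => (hq s).deriv ▸ hM s) ht
  have hderiv : ∀ t, HasDerivAt (fun s => ψ s - q 0 * s - M / 2 * s ^ 2)
      (q t - q 0 - M * t) t := fun t => by
    refine (((hψ t).sub ((hasDerivAt_id' t).const_mul (q 0))).sub
      ((hasDerivAt_pow 2 t).const_mul (M / 2))).congr_deriv ?_
    norm_num
    ring
  have hanti : AntitoneOn (fun s => ψ s - q 0 * s - M / 2 * s ^ 2) (Set.Ici 0) := by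
    refine antitoneOn_of_hasDerivWithinAt_nonpos (convex_Ici 0)
      (fun t _ => (hderiv t).continuousAt.continuousWithinAt)
      (fun t _ => (hderiv t).hasDerivWithinAt) fun t ht => ?_
    rw [interior_Ici, Set.mem_Ioi] at ht
    linarith [hq_le t ht.le]
  have := hanti Set.self_mem_Ici (Set.mem_Ici.2 zero_le_one) zero_le_one
  norm_num at this
  linarith

section lmax

open Real

lemma hasDerivAt_exp_add_exp_neg_line (a d t : ℝ) :
    HasDerivAt (fun s => exp (a + s * d) + exp (-(a + s * d)))
      (d * (exp (a + t * d) - exp (-(a + t * d)))) t := by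
  have hline : HasDerivAt (fun s => a + s * d) d t := by
    simpa using ((hasDerivAt_id' t).mul_const d).const_add a
  exact (hline.exp.add hline.fun_neg.exp).congr_deriv (by ring)

lemma hasDerivAt_exp_sub_exp_neg_line (a d t : ℝ) :
    HasDerivAt (fun s => exp (a + s * d) - exp (-(a + s * d)))
      (d * (exp (a + t * d) + exp (-(a + t * d)))) t := by
  have hline : HasDerivAt (fun s => a + s * d) d t := by
    simpa using ((hasDerivAt_id' t).mul_const d).const_add a
  exact (hline.exp.sub hline.fun_neg.exp).congr_deriv (by ring)

variable {ι : Type*} [Fintype ι]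

lemma lmax_add_le (x u : ι → ℝ) {m : ℝ} (hu : ∀ i, |u i| ≤ m) :
    lmax (x + u) ≤ lmax x + lmaxGrad x ⬝ᵥ u + m ^ 2 / 2 := by
  rcases isEmpty_or_nonempty ι with hι | hι
  · simp [lmax, dotProduct]
    positivity
  set Z : ℝ → ℝ := fun t => ∑ i, (exp (x i + t * u i) + exp (-(x i + t * u i))) with hZ_def
  set Z₁ : ℝ → ℝ := fun t => ∑ i, u i * (exp (x i + t * u i) - exp (-(x i + t * u i)))
    with hZ₁_def
  set Z₂ : ℝ → ℝ := fun t => ∑ i, u i * (u i * (exp (x i + t * u i) + exp (-(x i + t * u i))))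
  have hZ_pos : ∀ t, 0 < Z t := fun t =>
    Finset.sum_pos (fun i _ => by positivity) Finset.univ_nonempty
  have hZ : ∀ t, HasDerivAt Z (Z₁ t) t := fun t =>
    HasDerivAt.fun_sum fun i _ => hasDerivAt_exp_add_exp_neg_line (x i) (u i) t
  have hZ₁ : ∀ t, HasDerivAt Z₁ (Z₂ t) t := fun t =>
    HasDerivAt.fun_sum fun i _ => (hasDerivAt_exp_sub_exp_neg_line (x i) (u i) t).const_mul (u i)
  have hvar : ∀ t, (Z₂ t * Z t - Z₁ t * Z₁ t) / Z t ^ 2 ≤ m ^ 2 := by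
    intro t
    have hZ₂ : Z₂ t ≤ m ^ 2 * Z t := by
      rw [Finset.mul_sum]
      refine Finset.sum_le_sum fun i _ => ?_
      rw [← mul_assoc]
      have hu_sq : u i * u i ≤ m ^ 2 := by
        rw [← abs_mul_abs_self, sq]
        exact mul_self_le_mul_self (abs_nonneg _) (hu i)
      exact mul_le_mul_of_nonneg_right hu_sq (by positivity)
    rw [div_le_iff₀ (by positivity)]
    nlinarith [hZ_pos t, mul_self_nonneg (Z₁ t)]
  have htaylor := le_add_deriv_add_half_of_deriv_le (fun t => (hZ t).log (hZ_pos t).ne')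
    (fun t => (hZ₁ t).div (hZ t) (hZ_pos t).ne') hvar
  have hgrad : lmaxGrad x ⬝ᵥ u = Z₁ 0 / Z 0 := by
    simp only [dotProduct, lmaxGrad, hZ₁_def, hZ_def, zero_mul, add_zero, Finset.sum_div]
    exact Finset.sum_congr rfl fun i _ => by ring
  have hZ_one : lmax (x + u) = log (Z 1) := by simp [lmax, hZ_def]
  have hZ_zero : lmax x = log (Z 0) := by simp [lmax, hZ_def]
  rwa [hZ_one, hZ_zero, hgrad]

end lmax

section step

variable {V E W : Type*} [Fintype E] [Fintype W]

lemma abs_neg_mul_sign_mul_div_le (t x : ℝ) {c : ℝ} (hc : c ≠ 0) :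
    |-t * Real.sign x * c / c| ≤ |t| := by
  rw [mul_div_cancel_right₀ _ hc, abs_mul, abs_neg]
  exact mul_le_of_le_one_right (abs_nonneg t) (Real.abs_sign_le_one x)

lemma dotProduct_neg_mul_sign_mul (g c : E → ℝ) (hc : ∀ e, 0 ≤ c e) (t : ℝ) :
    g ⬝ᵥ (fun e => -t * Real.sign (g e) * c e) = -(t * l1 fun e => c e * g e) := by
  simp only [dotProduct, l1, Finset.mul_sum, ← Finset.sum_neg_distrib]
  refine Finset.sum_congr rfl fun e _ => ?_
  rw [abs_mul, abs_of_nonneg (hc e), ← Real.mul_sign_self]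
  ring

lemma dotProduct_div_add_dotProduct_neg_smul_mulVec [Fintype V] (B : Matrix V E ℝ)
    (R : Matrix W V ℝ) (c s₁ h : E → ℝ) (s₂ : W → ℝ) (a : ℝ) :
    s₁ ⬝ᵥ (fun e => h e / c e) + s₂ ⬝ᵥ (-a • R *ᵥ (B *ᵥ h))
      = (fun e => s₁ e / c e - a * (Bᵀ *ᵥ Rᵀ *ᵥ s₂) e) ⬝ᵥ h := by
  rw [dotProduct_smul, dotProduct_mulVec, dotProduct_mulVec, ← mulVec_transpose,
    ← mulVec_transpose]
  simp only [dotProduct, smul_eq_mul, Finset.mul_sum, ← Finset.sum_add_distrib]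
  exact Finset.sum_congr rfl fun e _ => by ring

end step

theorem descent_step_general {V E W : Type*} [Fintype V] [Fintype E] [Fintype W]
    (B : Matrix V E ℝ) (c : E → ℝ) (hc : ∀ e, 0 < c e)
    (α : ℝ) (R : Matrix W V ℝ)
    (hR : IsCongestionApprox B c α R)
    (b : V → ℝ)
    (f : E → ℝ) :
    let φ : (E → ℝ) → ℝ := fun f' =>
      lmax (fun e => f' e / c e) + lmax (fun w => 2 * α * R.mulVec (b - B.mulVec f') w)
    let g : E → ℝ := fun e =>
      lmaxGrad (fun e' => f e' / c e') e / c e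
        - 2 * α * B.transpose.mulVec
            (R.transpose.mulVec
              (lmaxGrad (fun w => 2 * α * R.mulVec (b - B.mulVec f) w))) e
    let δ : ℝ := l1 (fun e => c e * g e)
    let h : E → ℝ := fun e => -(δ / (1 + 4 * α ^ 2)) * Real.sign (g e) * c e
    φ (f + h) ≤ φ f - δ ^ 2 / (2 + 8 * α ^ 2) := by
  intro φ g δ h
  set t := δ / (1 + 4 * α ^ 2) with ht
  set x₁ : E → ℝ := fun e => f e / c e
  set x₂ : W → ℝ := fun w => 2 * α * (R *ᵥ (b - B *ᵥ f)) w
  set u₁ : E → ℝ := fun e => h e / c e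
  set u₂ : W → ℝ := -(2 * α) • R *ᵥ (B *ᵥ h)
  have hu₁ : ∀ e, |u₁ e| ≤ |t| := fun e => abs_neg_mul_sign_mul_div_le t (g e) (hc e).ne'
  have hu₂ : ∀ w, |u₂ w| ≤ |2 * α| * |t| := fun w => by
    have hRBh := (abs_le_linf _ w).trans
      ((hR.linf_mulVec_mulVec_le h).trans (linf_le (abs_nonneg t) hu₁))
    simpa [u₂, abs_mul] using mul_le_mul_of_nonneg_left hRBh (abs_nonneg (2 * α))
  have hφ : φ (f + h) = lmax (x₁ + u₁) + lmax (x₂ + u₂) := by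
    show lmax _ + lmax _ = _
    congr 2 <;> funext i
    · simp [x₁, u₁, add_div]
    · simp [x₂, u₂, mulVec_add, mulVec_sub]
      ring
  have hlin : lmaxGrad x₁ ⬝ᵥ u₁ + lmaxGrad x₂ ⬝ᵥ u₂ = -(t * δ) := by
    rw [dotProduct_div_add_dotProduct_neg_smul_mulVec]
    exact dotProduct_neg_mul_sign_mul g c (fun e => (hc e).le) t
  calc φ (f + h) ≤ φ f - t * δ + |t| ^ 2 / 2 + (|2 * α| * |t|) ^ 2 / 2 := by
        rw [hφ]
        linarith [lmax_add_le x₁ u₁ hu₁, lmax_add_le x₂ u₂ hu₂]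
    _ = φ f - δ ^ 2 / (2 + 8 * α ^ 2) := by
        rw [ht, mul_pow, sq_abs, sq_abs]
        field_simp
        ring

/-- Descent step lemma: for the potential
`φ(f) = lmax(C⁻¹ f) + lmax(2α R(b − B f))` with gradient `g(f)`, the step
`h_e = −(δ/(1+4α²))·sgn(g(f)_e)·c_e` with `δ = ‖C g(f)‖₁` satisfies
`φ(f + h) ≤ φ(f) − δ²/(2 + 8α²)`. -/
theorem descent_step {V E W : Type*} [Fintype V] [Fintype E] [Fintype W]
    [Nonempty V] [Nonempty E]
    (B : Matrix V E ℝ) (c : E → ℝ) (hc : ∀ e, 0 < c e)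
    (α : ℝ) (hα : 1 ≤ α) (R : Matrix W V ℝ)
    (hR : IsCongestionApprox B c α R)
    (b : V → ℝ) (hb : ∃ f : E → ℝ, B.mulVec f = b)
    (f : E → ℝ) :
    let φ : (E → ℝ) → ℝ := fun f' =>
      lmax (fun e => f' e / c e) + lmax (fun w => 2 * α * R.mulVec (b - B.mulVec f') w)
    let g : E → ℝ := fun e =>
      lmaxGrad (fun e' => f e' / c e') e / c e
        - 2 * α * B.transpose.mulVec
            (R.transpose.mulVec
              (lmaxGrad (fun w => 2 * α * R.mulVec (b - B.mulVec f) w))) e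
    let δ : ℝ := l1 (fun e => c e * g e)
    let h : E → ℝ := fun e => -(δ / (1 + 4 * α ^ 2)) * Real.sign (g e) * c e
    φ (f + h) ≤ φ f - δ ^ 2 / (2 + 8 * α ^ 2) :=
  descent_step_general B c hc α R hR b f
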